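/- arXiv:1310.0986 — 2 statements merged into one kernel-verified Lean document; each statement's English description precedes it below -/
import Mathlib

section
/- The equation x³ + y³ = z³ has no solutions in nonzero integers x, y, z (Fermat's Last Theorem for exponent 3). -/
theorem flt_three (x y z : ℤ) (hx : x ≠ 0) (hy : y ≠ 0) (hz : z ≠ 0) :
    x ^ 3 + y ^ 3 ≠ z ^ 3 := by
  exact fermatLastTheoremFor_iff_int.mp fermatLastTheoremThree x y z hx hy hz
end

section
/- Sophie Germain's criterion: if p is an odd prime such that 2p + 1 is also prime, then the first case of Fermat's Last Theorem holds for p: there are no integers x, y, z with xᵖ + yᵖ = zᵖ and p not dividing xyz, xyz ≠ 0. -/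
/-!
Let `q = 2p + 1`. Every nonzero residue mod `q` has `p`-th power `±1`, and a sum of three signs is
never `0` mod `q`; so in a solution of `a ^ p + b ^ p + c ^ p = 0`, `q` divides one of `a, b, c`,
say `a`. For a primitive solution with `p ∤ abc`, the coprime factors `b + c` and
`(b ^ p + c ^ p) / (b + c)` of `(-a) ^ p` are `p`-th powers `A ^ p` and `T ^ p`; likewise
`c + a = B ^ p` and `a + b = C ^ p`. Mod `q`, `B ^ p + C ^ p + (-A) ^ p = 2a ≡ 0`, so by the first
step `q ∣ A`, i.e. `b ≡ -c`. Then `T ^ p ≡ p b ^ (p - 1) ≡ p`, since `b ≡ C ^ p ≡ ±1`; but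
`p ≢ 0, ±1 mod q`.
-/

open Finset

section AddPowQuot

variable {R : Type*} [CommRing R]

/-- For odd `n` this is `(u ^ n + v ^ n) / (u + v)`. -/
def addPowQuot (n : ℕ) (u v : R) : R :=
  ∑ i ∈ range n, u ^ i * (-v) ^ (n - 1 - i)

lemma add_mul_addPowQuot {n : ℕ} (hn : Odd n) (u v : R) :
    (u + v) * addPowQuot n u v = u ^ n + v ^ n := by
  rw [mul_comm, ← sub_neg_eq_add u v, addPowQuot, geom_sum₂_mul, hn.neg_pow, sub_neg_eq_add]

lemma add_dvd_addPowQuot_sub (n : ℕ) (u v : R) :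
    u + v ∣ addPowQuot n u v - n * u ^ (n - 1) := by
  rw [← Ideal.Quotient.eq_zero_iff_dvd, map_sub, sub_eq_zero]
  have huv : -Ideal.Quotient.mk (Ideal.span {u + v}) v = Ideal.Quotient.mk _ u := by
    rw [neg_eq_iff_add_eq_zero, add_comm, ← map_add, Ideal.Quotient.eq_zero_iff_dvd]
  simp only [addPowQuot, map_sum, map_mul, map_pow, map_neg, huv, map_natCast, geom_sum₂_self]

end AddPowQuot

lemma isCoprime_add_addPowQuot {p : ℕ} (hp : p.Prime) {u v : ℤ} (huv : IsCoprime u v)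
    (hpuv : ¬ (p : ℤ) ∣ u + v) : IsCoprime (u + v) (addPowQuot p u v) := by
  refine isCoprime_of_prime_dvd (fun h ↦ hpuv (h.1 ▸ dvd_zero _)) fun r hr hru hrQ ↦ ?_
  have hrpu : r ∣ p * u ^ (p - 1) := by
    simpa using dvd_sub hrQ (hru.trans (add_dvd_addPowQuot_sub p u v))
  rcases hr.dvd_or_dvd hrpu with hrp | hrp
  · exact hpuv ((hr.associated_of_dvd (Nat.prime_iff_prime_int.mp hp) hrp).symm.dvd.trans hru)
  · have hru' := hr.dvd_of_dvd_pow hrp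
    exact hr.not_isUnit (huv.isUnit_of_dvd' hru' ((dvd_add_right hru').1 hru))

lemma IsCoprime.of_pow_add_pow_add_pow_eq_zero {R : Type*} [CommRing R] {a b c : R} {n : ℕ}
    (hn : n ≠ 0) (hab : IsCoprime a b) (h : a ^ n + b ^ n + c ^ n = 0) : IsCoprime b c := by
  have hcb : IsCoprime (-a ^ n + b ^ n * (-1)) (b ^ n) := by
    rw [IsCoprime.add_mul_left_left_iff, IsCoprime.neg_left_iff]
    exact hab.pow
  rw [show -a ^ n + b ^ n * (-1) = c ^ n by linear_combination -h] at hcb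
  exact ((IsCoprime.pow_iff hn.bot_lt hn.bot_lt).1 hcb).symm

lemma IsCoprime.intCast_ne_zero {R : Type*} [CommRing R] [Nontrivial R] {a b : ℤ}
    (hab : IsCoprime a b) (ha : (a : R) = 0) : (b : R) ≠ 0 := by
  have := hab.map (Int.castRingHom R)
  rw [eq_intCast, eq_intCast, ha, isCoprime_zero_left] at this
  exact this.ne_zero

/-- A primitive solution of `a ^ p + b ^ p + c ^ p = 0` in the first case of Fermat's Last
Theorem. -/
structure FirstCaseTriple (p : ℕ) (a b c : ℤ) : Prop where
  sum_pow_eq_zero : a ^ p + b ^ p + c ^ p = 0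
  isCoprime : IsCoprime a b
  not_dvd_mul : ¬ (p : ℤ) ∣ a * b * c

namespace FirstCaseTriple

variable {p : ℕ} {a b c : ℤ}

lemma exists_of_add_pow_eq_pow (hodd : Odd p) {x y z : ℤ} (h : x ^ p + y ^ p = z ^ p)
    (hxyz : ¬ (p : ℤ) ∣ x * y * z) : ∃ a b c, FirstCaseTriple p a b c := by
  have hx : x ≠ 0 := by rintro rfl; simp at hxyz
  obtain ⟨g, a, b, hg, hab, rfl, rfl⟩ := Int.exists_gcd_one' (Int.gcd_pos_of_ne_zero_left y hx)
  obtain ⟨c, rfl⟩ : (g : ℤ) ∣ z :=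
    (Int.pow_dvd_pow_iff hodd.pos.ne').1 ⟨a ^ p + b ^ p, by rw [← h]; ring⟩
  refine ⟨a, b, -c, ⟨?_, Int.isCoprime_iff_gcd_eq_one.2 hab, fun hd ↦ hxyz ?_⟩⟩
  · apply mul_left_cancel₀ (pow_ne_zero p (Int.natCast_pos.2 hg).ne')
    rw [hodd.neg_pow]
    linear_combination h
  · exact hd.trans (Dvd.intro (-(g : ℤ) ^ 3) (by ring))

lemma rotate (hp : p ≠ 0) (h : FirstCaseTriple p a b c) : FirstCaseTriple p b c a where
  sum_pow_eq_zero := by linear_combination h.sum_pow_eq_zero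
  isCoprime := h.isCoprime.of_pow_add_pow_add_pow_eq_zero hp h.sum_pow_eq_zero
  not_dvd_mul := by rw [show b * c * a = a * b * c by ring]; exact h.not_dvd_mul

lemma not_dvd_add (hp : p.Prime) (hodd : Odd p) (h : FirstCaseTriple p a b c) :
    ¬ (p : ℤ) ∣ a + b := fun hd ↦ by
  have hpc : (p : ℤ) ∣ c ^ p := by
    rw [show c ^ p = -(a ^ p + b ^ p) by linear_combination h.sum_pow_eq_zero, dvd_neg]
    exact hd.trans (Odd.add_dvd_pow_add_pow a b hodd)
  exact h.not_dvd_mul (((Nat.prime_iff_prime_int.mp hp).dvd_of_dvd_pow hpc).mul_left _)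

lemma exists_pow_eq_add (hp : p.Prime) (hodd : Odd p) (h : FirstCaseTriple p a b c) :
    (∃ d, a + b = d ^ p) ∧ ∃ t, addPowQuot p a b = t ^ p := by
  have hcop := isCoprime_add_addPowQuot hp h.isCoprime (h.not_dvd_add hp hodd)
  have hmul : (a + b) * addPowQuot p a b = (-c) ^ p := by
    rw [add_mul_addPowQuot hodd, hodd.neg_pow]
    linear_combination h.sum_pow_eq_zero
  exact ⟨Int.eq_pow_of_mul_eq_pow_odd_left hcop hodd hmul,
    Int.eq_pow_of_mul_eq_pow_odd_right hcop hodd hmul⟩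

end FirstCaseTriple

section SophieGermainPrime

variable {p : ℕ} [hq : Fact (2 * p + 1).Prime]

lemma ZMod.pow_eq_one_or_neg_one_of_ne_zero {a : ZMod (2 * p + 1)} (ha : a ≠ 0) :
    a ^ p = 1 ∨ a ^ p = -1 := by
  simpa [show (2 * p + 1) / 2 = p by omega] using ZMod.pow_div_two_eq_neg_one_or_one _ ha

lemma ZMod.pow_add_pow_add_pow_ne_zero (hp : p ≠ 1) {a b c : ZMod (2 * p + 1)} (ha : a ≠ 0)
    (hb : b ≠ 0) (hc : c ≠ 0) : a ^ p + b ^ p + c ^ p ≠ 0 := by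
  have h3 : (3 : ZMod (2 * p + 1)) ≠ 0 := by
    intro h
    have := Nat.le_of_dvd (by norm_num) ((ZMod.natCast_eq_zero_iff 3 _).1 (by exact_mod_cast h))
    have := hq.out.two_le
    omega
  rcases pow_eq_one_or_neg_one_of_ne_zero ha with ha | ha <;>
    rcases pow_eq_one_or_neg_one_of_ne_zero hb with hb | hb <;>
    rcases pow_eq_one_or_neg_one_of_ne_zero hc with hc | hc <;>
    rw [ha, hb, hc] <;> ring_nf <;> simp [h3]

lemma ZMod.pow_ne_natCast (hp : p ≠ 1) (t : ZMod (2 * p + 1)) : t ^ p ≠ p := by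
  have hp0 : p ≠ 0 := by have := hq.out.two_le; omega
  intro h
  by_cases ht : t = 0
  · rw [ht, zero_pow hp0, eq_comm, ZMod.natCast_eq_zero_iff] at h
    have := Nat.le_of_dvd (by omega) h
    omega
  rcases pow_eq_one_or_neg_one_of_ne_zero ht with h1 | h1 <;> rw [h1] at h
  · rw [← Nat.cast_one (R := ZMod (2 * p + 1)), ZMod.natCast_eq_natCast_iff',
      Nat.mod_eq_of_lt (by omega), Nat.mod_eq_of_lt (by omega)] at h
    omega
  · rw [eq_comm, eq_neg_iff_add_eq_zero, ← Nat.cast_succ, ZMod.natCast_eq_zero_iff] at h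
    have := Nat.le_of_dvd (by omega) h
    omega

lemma FirstCaseTriple.intCast_add_eq_zero (hp : p.Prime) (hodd : Odd p) {a b c : ℤ}
    (h : FirstCaseTriple p a b c) (ha : (a : ZMod (2 * p + 1)) = 0) :
    (b : ZMod (2 * p + 1)) + c = 0 := by
  have hbca := h.rotate hp.ne_zero
  have hcab := hbca.rotate hp.ne_zero
  obtain ⟨⟨A, hA⟩, -⟩ := hbca.exists_pow_eq_add hp hodd
  obtain ⟨⟨B, hB⟩, -⟩ := hcab.exists_pow_eq_add hp hodd
  obtain ⟨⟨C, hC⟩, -⟩ := h.exists_pow_eq_add hp hodd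
  have hBc : (B : ZMod (2 * p + 1)) ^ p = c := by
    rw [← Int.cast_pow, ← hB, Int.cast_add, ha, add_zero]
  have hCb : (C : ZMod (2 * p + 1)) ^ p = b := by
    rw [← Int.cast_pow, ← hC, Int.cast_add, ha, zero_add]
  have hAbc : (A : ZMod (2 * p + 1)) ^ p = b + c := by
    rw [← Int.cast_pow, ← hA, Int.cast_add]
  have hB0 : (B : ZMod (2 * p + 1)) ≠ 0 := by
    rintro hB0
    rw [hB0, zero_pow hp.ne_zero] at hBc
    exact hcab.isCoprime.symm.intCast_ne_zero ha hBc.symm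
  have hC0 : (C : ZMod (2 * p + 1)) ≠ 0 := by
    rintro hC0
    rw [hC0, zero_pow hp.ne_zero] at hCb
    exact h.isCoprime.intCast_ne_zero ha hCb.symm
  by_contra hbc
  have hA0 : (A : ZMod (2 * p + 1)) ≠ 0 := by
    rintro hA0
    rw [hA0, zero_pow hp.ne_zero] at hAbc
    exact hbc hAbc.symm
  refine ZMod.pow_add_pow_add_pow_ne_zero hp.ne_one hB0 hC0 (neg_ne_zero.2 hA0) ?_
  rw [hodd.neg_pow, hBc, hCb, hAbc]
  ring

lemma FirstCaseTriple.intCast_ne_zero (hp : p.Prime) (hodd : Odd p) {a b c : ℤ}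
    (h : FirstCaseTriple p a b c) : (a : ZMod (2 * p + 1)) ≠ 0 := by
  intro ha
  obtain ⟨-, T, hT⟩ := (h.rotate hp.ne_zero).exists_pow_eq_add hp hodd
  obtain ⟨⟨C, hC⟩, -⟩ := h.exists_pow_eq_add hp hodd
  have hCb : (C : ZMod (2 * p + 1)) ^ p = b := by
    rw [← Int.cast_pow, ← hC, Int.cast_add, ha, zero_add]
  have hC0 : (C : ZMod (2 * p + 1)) ≠ 0 := by
    rintro hC0
    rw [hC0, zero_pow hp.ne_zero] at hCb
    exact h.isCoprime.intCast_ne_zero ha hCb.symm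
  have hb1 : (b : ZMod (2 * p + 1)) ^ (p - 1) = 1 := by
    have heven : Even (p - 1) := Nat.Odd.sub_odd hodd odd_one
    rcases ZMod.pow_eq_one_or_neg_one_of_ne_zero hC0 with h1 | h1 <;>
      rw [← hCb, h1] <;> simp [heven.neg_one_pow]
  have hTp : (T : ZMod (2 * p + 1)) ^ p = p := by
    have hq_dvd : ((2 * p + 1 : ℕ) : ℤ) ∣ b + c := by
      rw [← ZMod.intCast_zmod_eq_zero_iff_dvd, Int.cast_add]
      exact h.intCast_add_eq_zero hp hodd ha
    have := hq_dvd.trans (add_dvd_addPowQuot_sub p b c)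
    rw [hT, ← ZMod.intCast_zmod_eq_zero_iff_dvd] at this
    push_cast at this
    linear_combination this + p * hb1
  exact ZMod.pow_ne_natCast hp.ne_one T hTp

end SophieGermainPrime

theorem sophie_germain (p : ℕ) (hp : Nat.Prime p) (hodd : Odd p)
    (hsg : Nat.Prime (2 * p + 1)) :
    ¬ ∃ x y z : ℤ, x * y * z ≠ 0 ∧ ¬ (p : ℤ) ∣ x * y * z ∧ x ^ p + y ^ p = z ^ p := by
  rintro ⟨x, y, z, -, hpxyz, h⟩
  have := Fact.mk hsg
  obtain ⟨a, b, c, habc⟩ := FirstCaseTriple.exists_of_add_pow_eq_pow hodd h hpxyz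
  have hbca := habc.rotate hp.ne_zero
  refine ZMod.pow_add_pow_add_pow_ne_zero hp.ne_one (habc.intCast_ne_zero hp hodd)
    (hbca.intCast_ne_zero hp hodd) ((hbca.rotate hp.ne_zero).intCast_ne_zero hp hodd) ?_
  exact_mod_cast congrArg (Int.cast : ℤ → ZMod (2 * p + 1)) habc.sum_pow_eq_zero
end
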